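/- Let ψ be a proper 3-coloring, with colors {1,2,3}, of a cycle D of length r whose vertices are listed in cyclic order, and let (X_1, X_2, …, X_k) with k ≥ 3 be a segmentation of D with respect to ψ whose segments occur in this cyclic order (each X_i is the vertex set of a path of D, and X_{i+1} immediately follows X_i along the cyclic order, indices modulo k). Let λ be the coloring of the cycle C_k with vertices 1, 2, …, k in cyclic order defined by letting λ(i) be the flag of X_i. Then λ is a proper 3-coloring of C_k, and the winding number of λ on C_k equals the winding number of ψ on D. -/
import Mathlib


/-- The winding number of a 3-coloring `φ` of a cycle whose vertices are
`v_1, …, v_k` in cyclic order (vertex `v_{i+1}` is represented by `i : ZMod k`).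
Colors lie in `ZMod 3`, where `1` and `2` are the colors 1 and 2 and `0`
represents the color 3 (so `α + 1` is the cyclic successor of the color `α`,
with `3 + 1 = 1`). -/
def winding (k : ℕ) (φ : ZMod k → ZMod 3) : ℤ :=
  ∑ i ∈ Finset.range k,
    ((if φ (i : ZMod k) = 1 ∧ φ ((i : ZMod k) + 1) = 2 then 1 else 0)
      - (if φ (i : ZMod k) = 2 ∧ φ ((i : ZMod k) + 1) = 1 then 1 else 0))

/-- helper weight of one edge -/
def wAux (a b : ZMod 3) : ℤ :=
  (if a = 1 ∧ b = 2 then 1 else 0) - (if a = 2 ∧ b = 1 then 1 else 0)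

lemma wAux_pair (α : ZMod 3) : wAux α (α + 1) + wAux (α + 1) α = 0 := by
  revert α; decide

lemma sum_range_zmod (r : ℕ) [NeZero r] (f : ZMod r → ℤ) :
    ∑ j ∈ Finset.range r, f j = ∑ x : ZMod r, f x := by
  apply Finset.sum_nbij' (i := fun n : ℕ => (n : ZMod r)) (j := fun x : ZMod r => x.val)
  · intro a _; exact Finset.mem_univ _
  · intro a _; exact Finset.mem_range.mpr (ZMod.val_lt a)
  · intro a ha; simp [ZMod.val_natCast_of_lt (Finset.mem_range.mp ha)]
  · intro a _; simp [ZMod.natCast_val, ZMod.cast_id]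
  · intro a _; rfl


/-- Let `ψ` be a proper 3-coloring of a cycle `D` of length `r` (vertices
`ZMod r` in cyclic order), and let `(X_1, …, X_k)`, `k ≥ 3`, be a segmentation of
`D` with respect to `ψ` whose segments occur in this cyclic order: segment
`X_{i+1}` consists of the `len i` consecutive vertices `t i, t i + 1, …,
t i + (len i − 1)`, the next segment starting at `t (i+1) = t i + len i`; the
segments partition `V(D)` (their lengths sum to `r`), each is the vertex set of a
path with an even number of edges (`len i` is odd), `ψ` uses on `X_{i+1}` only
the colors `ψ (t i)` (the flag) and `ψ (t i) + 1`, and both ends get the flag.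
Let `λ` color the vertex `i` of the cycle `C_k` by the flag `ψ (t i)` of
`X_{i+1}`.  Then `λ` is a proper 3-coloring of `C_k` and its winding number
equals that of `ψ` on `D`. -/
theorem stmt_7 (r k : ℕ) (hr : 3 ≤ r) (hk : 3 ≤ k)
    (ψ : ZMod r → ZMod 3) (hψ : ∀ i : ZMod r, ψ i ≠ ψ (i + 1))
    (t : ZMod k → ZMod r) (len : ZMod k → ℕ)
    (hlen : ∀ i : ZMod k, 0 < len i ∧ Odd (len i))
    (hsum : (∑ i ∈ Finset.range k, len (i : ZMod k)) = r)
    (hnext : ∀ i : ZMod k, t (i + 1) = t i + (len i : ZMod r))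
    (hseg : ∀ (i : ZMod k) (m : ℕ), m < len i →
        ψ (t i + (m : ZMod r)) = ψ (t i) ∨ ψ (t i + (m : ZMod r)) = ψ (t i) + 1)
    (hend : ∀ i : ZMod k, ψ (t i + ((len i - 1 : ℕ) : ZMod r)) = ψ (t i)) :
    (∀ i : ZMod k, ψ (t i) ≠ ψ (t (i + 1))) ∧
    winding k (fun i => ψ (t i)) = winding r ψ := by
  haveI : NeZero r := ⟨by omega⟩
  haveI : NeZero k := ⟨by omega⟩
  -- cast of the last-vertex step
  have hE : ∀ i : ZMod k, t i + ((len i - 1 : ℕ) : ZMod r) + 1 = t (i + 1) := by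
    intro i
    have h1 : 1 ≤ len i := (hlen i).1
    have h2 : (len i - 1) + 1 = len i := Nat.sub_add_cancel h1
    rw [hnext]
    have : ((len i - 1 : ℕ) : ZMod r) + 1 = ((len i - 1 + 1 : ℕ) : ZMod r) := by push_cast; ring
    rw [add_assoc, this, h2]
  -- properness of the flag coloring
  have hflag : ∀ i : ZMod k, ψ (t i) ≠ ψ (t (i + 1)) := by
    intro i
    have := hψ (t i + ((len i - 1 : ℕ) : ZMod r))
    rw [hE i, hend i] at this
    exact this
  refine ⟨hflag, ?_⟩
  -- parity of colors within a segment
  have par : ∀ (i : ZMod k) (m : ℕ), m < len i →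
      ψ (t i + (m : ZMod r)) = ψ (t i) + ((m % 2 : ℕ) : ZMod 3) := by
    intro i m
    induction m with
    | zero => intro _; simp
    | succ m ih =>
      intro hm
      have h1 := ih (by omega)
      have hcast : t i + ((m + 1 : ℕ) : ZMod r) = (t i + (m : ZMod r)) + 1 := by
        push_cast; ring
      have hne : ψ (t i + ((m + 1 : ℕ) : ZMod r)) ≠ ψ (t i + (m : ZMod r)) := by
        rw [hcast]; exact (hψ _).symm
      rcases hseg i (m + 1) hm with h | h
      · rcases Nat.even_or_odd m with he | ho
        · exact absurd (by rw [h, h1, Nat.even_iff.mp he]; simp) hne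
        · have ho' := Nat.odd_iff.mp ho
          have h0 : (m + 1) % 2 = 0 := by omega
          rw [h, h0]; simp
      · rcases Nat.even_or_odd m with he | ho
        · have he' := Nat.even_iff.mp he
          have h0 : (m + 1) % 2 = 1 := by omega
          rw [h, h0]; simp
        · exact absurd (by rw [h, h1, Nat.odd_iff.mp ho]; push_cast; ring) hne
  -- the edge-weight function on D
  set g : ZMod r → ℤ := fun j => wAux (ψ j) (ψ (j + 1)) with hg
  -- per-segment sums
  have seg_sum : ∀ i : ZMod k,
      ∑ m ∈ Finset.range (len i), g (t i + (m : ZMod r)) = wAux (ψ (t i)) (ψ (t (i + 1))) := by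
    intro i
    obtain ⟨q, hq⟩ := (hlen i).2
    -- even part sums to zero
    have even_part : ∀ j : ℕ, j ≤ q →
        ∑ m ∈ Finset.range (2 * j), g (t i + (m : ZMod r)) = 0 := by
      intro j
      induction j with
      | zero => intro _; simp
      | succ j ih =>
        intro hj
        have hterm : ∀ m : ℕ, m + 1 < len i →
            g (t i + (m : ZMod r)) = wAux (ψ (t i) + ((m % 2 : ℕ) : ZMod 3))
              (ψ (t i) + (((m + 1) % 2 : ℕ) : ZMod 3)) := by
          intro m hm1
          have hcast : t i + (m : ZMod r) + 1 = t i + ((m + 1 : ℕ) : ZMod r) := by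
            push_cast; ring
          rw [hg]
          simp only []
          rw [hcast, par i m (by omega), par i (m + 1) hm1]
        have ha : 2 * j + 1 < len i := by omega
        have hb : 2 * j + 1 + 1 < len i := by omega
        have e1 : (2 * j) % 2 = 0 := by omega
        have e2 : (2 * j + 1) % 2 = 1 := by omega
        have e3 : (2 * j + 1 + 1) % 2 = 0 := by omega
        have h2j : 2 * (j + 1) = 2 * j + 1 + 1 := by ring
        rw [h2j, Finset.sum_range_succ, Finset.sum_range_succ, ih (by omega),
          hterm (2 * j) (by omega), hterm (2 * j + 1) hb, e1, e2, e3]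
        simpa using wAux_pair (ψ (t i))
    have hlast : g (t i + ((2 * q : ℕ) : ZMod r)) = wAux (ψ (t i)) (ψ (t (i + 1))) := by
      have h2q : (2 * q : ℕ) = len i - 1 := by omega
      rw [hg]; simp only []
      rw [h2q, hE i, hend i]
    rw [hq, Finset.sum_range_succ, even_part q le_rfl, hlast, zero_add]
  -- positions of segment starts
  set s : ℕ → ℕ := fun n => ∑ j ∈ Finset.range n, len (j : ZMod k) with hs
  have ht : ∀ n : ℕ, t ((n : ℕ) : ZMod k) = t ((0 : ℕ) : ZMod k) + ((s n : ℕ) : ZMod r) := by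
    intro n
    induction n with
    | zero => simp [hs]
    | succ n ih =>
      have hc : ((n + 1 : ℕ) : ZMod k) = ((n : ℕ) : ZMod k) + 1 := by push_cast; ring
      rw [hc, hnext, ih]
      have : s (n + 1) = s n + len ((n : ℕ) : ZMod k) := Finset.sum_range_succ _ n
      rw [this]
      push_cast
      ring
  -- block decomposition of the big sum
  have hblock : ∀ n : ℕ,
      ∑ j ∈ Finset.range (s n), g (t ((0 : ℕ) : ZMod k) + (j : ZMod r)) =
      ∑ i ∈ Finset.range n, ∑ m ∈ Finset.range (len (i : ZMod k)),
        g (t ((i : ℕ) : ZMod k) + (m : ZMod r)) := by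
    intro n
    induction n with
    | zero => simp [hs]
    | succ n ih =>
      have h1 : s (n + 1) = s n + len ((n : ℕ) : ZMod k) := Finset.sum_range_succ _ n
      rw [h1, Finset.sum_range_add, ih, Finset.sum_range_succ]
      congr 1
      apply Finset.sum_congr rfl
      intro m _
      rw [ht n]
      push_cast
      ring_nf
  -- assemble
  have hw : winding r ψ = ∑ j ∈ Finset.range r, g ((j : ZMod r)) := rfl
  have hshift : ∑ j ∈ Finset.range r, g ((j : ZMod r)) =
      ∑ j ∈ Finset.range r, g (t ((0 : ℕ) : ZMod k) + (j : ZMod r)) := by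
    rw [sum_range_zmod r g, sum_range_zmod r (fun x => g (t ((0 : ℕ) : ZMod k) + x))]
    exact (Fintype.sum_equiv (Equiv.addLeft (t ((0 : ℕ) : ZMod k))) _ _ (fun x => rfl)).symm
  have hsk : s k = r := hsum
  have final : winding r ψ = ∑ i ∈ Finset.range k, wAux (ψ (t (i : ZMod k))) (ψ (t ((i : ZMod k) + 1))) := by
    have hb := hblock k
    rw [hsk] at hb
    rw [hw, hshift, hb]
    apply Finset.sum_congr rfl
    intro i _
    exact seg_sum (i : ZMod k)
  rw [final]
  rfl
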